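/- Let D be an N×N symmetric matrix and F = −JDJ its criterion matrix with eigenvalues λ_i. Then the optimal stress L* = min over Euclidean distance matrices D' of ‖D − D'‖_F² satisfies L* ≥ Σ_{i: λ_i<0} λ_i². -/

import Mathlib

open Matrix

/-- The `N × N` all-ones matrix. -/
def onesM (N : ℕ) : Matrix (Fin N) (Fin N) ℝ := Matrix.of fun _ _ => 1

/-- The averaging matrix `P = (1/N) 1_N 1_Nᵀ`. -/
noncomputable def avgM (N : ℕ) : Matrix (Fin N) (Fin N) ℝ := (N : ℝ)⁻¹ • onesM N

/-- The centering matrix `J = I_N − (1/N) 1_N 1_Nᵀ`. -/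
noncomputable def centerM (N : ℕ) : Matrix (Fin N) (Fin N) ℝ := 1 - avgM N

/-- Squared Frobenius norm. -/
def frobSq {N : ℕ} (M : Matrix (Fin N) (Fin N) ℝ) : ℝ := ∑ i, ∑ j, (M i j) ^ 2

/-- `D'` is a Euclidean distance matrix (Gower criterion form): symmetric,
    hollow, entrywise nonnegative, with `−JD'J` positive semidefinite. -/
def IsEDM {N : ℕ} (D' : Matrix (Fin N) (Fin N) ℝ) : Prop :=
  D'.IsSymm ∧ (∀ i, D' i i = 0) ∧ (∀ i j, 0 ≤ D' i j) ∧
    (-(centerM N * D' * centerM N)).PosSemidef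

/-! Since `J` is a symmetric idempotent, `‖J X J‖_F ≤ ‖X‖_F`, and for an EDM `D'` the matrix
`J (D - D') J = F' - F` with `F' = -J D' J` positive semidefinite. In an orthonormal eigenbasis
of `F` the diagonal entries of `F' - F` are `g_i - λ_i` with `g_i ≥ 0`, so already the diagonal
contributes at least `Σ_{λ_i < 0} λ_i²` to `‖F' - F‖_F²`. -/

section

variable {N : ℕ}

lemma frobSq_eq_trace (A : Matrix (Fin N) (Fin N) ℝ) : frobSq A = (Aᵀ * A).trace := by
  simp only [frobSq, trace, diag, mul_apply, transpose_apply, sq]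
  exact Finset.sum_comm

lemma frobSq_nonneg (A : Matrix (Fin N) (Fin N) ℝ) : 0 ≤ frobSq A := by
  unfold frobSq; positivity

lemma frobSq_transpose (A : Matrix (Fin N) (Fin N) ℝ) : frobSq Aᵀ = frobSq A :=
  Finset.sum_comm

lemma sum_sq_diag_le_frobSq (A : Matrix (Fin N) (Fin N) ℝ) :
    ∑ i, A i i ^ 2 ≤ frobSq A :=
  Finset.sum_le_sum fun i _ =>
    Finset.single_le_sum (fun j _ => sq_nonneg (A i j)) (Finset.mem_univ i)

lemma frobSq_transpose_mul_mul {U : Matrix (Fin N) (Fin N) ℝ} (hU : U * Uᵀ = 1)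
    (X : Matrix (Fin N) (Fin N) ℝ) : frobSq (Uᵀ * X * U) = frobSq X := by
  have hconj : (Uᵀ * X * U)ᵀ * (Uᵀ * X * U) = Uᵀ * (Xᵀ * X) * U := by
    simp only [transpose_mul, transpose_transpose, Matrix.mul_assoc]
    rw [← Matrix.mul_assoc U Uᵀ, hU, Matrix.one_mul]
  rw [frobSq_eq_trace, frobSq_eq_trace, hconj, trace_mul_cycle, hU, Matrix.one_mul]

lemma frobSq_mul_eq_trace {P : Matrix (Fin N) (Fin N) ℝ} (hPT : Pᵀ = P)
    (hP : IsIdempotentElem P) (A : Matrix (Fin N) (Fin N) ℝ) :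
    frobSq (A * P) = (Aᵀ * A * P).trace := by
  rw [frobSq_eq_trace, transpose_mul, hPT,
    show P * Aᵀ * (A * P) = P * (Aᵀ * A * P) by simp only [Matrix.mul_assoc],
    trace_mul_comm, Matrix.mul_assoc, hP.eq]

lemma frobSq_mul_le {P : Matrix (Fin N) (Fin N) ℝ} (hPT : Pᵀ = P)
    (hP : IsIdempotentElem P) (A : Matrix (Fin N) (Fin N) ℝ) :
    frobSq (A * P) ≤ frobSq A := by
  have hQT : (1 - P)ᵀ = 1 - P := by rw [transpose_sub, transpose_one, hPT]
  have hsplit : frobSq (A * P) + frobSq (A * (1 - P)) = frobSq A := by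
    rw [frobSq_mul_eq_trace hPT hP, frobSq_mul_eq_trace hQT hP.one_sub, ← trace_add,
      ← Matrix.mul_add, add_sub_cancel, Matrix.mul_one, frobSq_eq_trace]
  linarith [frobSq_nonneg (A * (1 - P))]

lemma frobSq_mul_mul_le {P : Matrix (Fin N) (Fin N) ℝ} (hPT : Pᵀ = P)
    (hP : IsIdempotentElem P) (A : Matrix (Fin N) (Fin N) ℝ) :
    frobSq (P * A * P) ≤ frobSq A :=
  calc frobSq (P * A * P) ≤ frobSq (P * A) := frobSq_mul_le hPT hP _
    _ = frobSq (Aᵀ * P) := by rw [← frobSq_transpose, transpose_mul, hPT]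
    _ ≤ frobSq Aᵀ := frobSq_mul_le hPT hP _
    _ = frobSq A := frobSq_transpose A

end

lemma transpose_centerM (N : ℕ) : (centerM N)ᵀ = centerM N := by
  simp [centerM, avgM, onesM, transpose_sub, ← Matrix.ext_iff]

lemma isIdempotentElem_centerM (N : ℕ) : IsIdempotentElem (centerM N) := by
  have havg : IsIdempotentElem (avgM N) := by
    rcases N.eq_zero_or_pos with rfl | hN
    · exact Subsingleton.elim _ _
    · ext i j
      simp only [avgM, onesM, smul_of, mul_apply, of_apply, Pi.smul_apply, smul_eq_mul, mul_one,
        Finset.sum_const, Finset.card_univ, Fintype.card_fin, nsmul_eq_mul, Matrix.smul_apply]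
      field_simp
  exact havg.one_sub

lemma isEDM_zero (N : ℕ) : IsEDM (0 : Matrix (Fin N) (Fin N) ℝ) := by
  refine ⟨isSymm_zero, fun _ => rfl, fun _ _ => le_rfl, ?_⟩
  simpa using PosSemidef.zero

lemma sum_sq_of_neg_le_sum_sq_sub {ι : Type*} [Fintype ι] (l g : ι → ℝ) (hg : ∀ i, 0 ≤ g i) :
    ∑ i ∈ Finset.univ.filter (fun i => l i < 0), l i ^ 2 ≤ ∑ i, (g i - l i) ^ 2 :=
  calc _ ≤ ∑ i ∈ Finset.univ.filter (fun i => l i < 0), (g i - l i) ^ 2 :=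
        Finset.sum_le_sum fun i hi => by
          have := (Finset.mem_filter.mp hi).2
          nlinarith [hg i]
    _ ≤ ∑ i, (g i - l i) ^ 2 :=
        Finset.sum_le_sum_of_subset_of_nonneg (Finset.filter_subset _ _)
          fun _ _ _ => sq_nonneg _

lemma sum_sq_neg_eigenvalues_le_frobSq_sub {N : ℕ} {F F' : Matrix (Fin N) (Fin N) ℝ}
    (hF : F.IsHermitian) (hF' : F'.PosSemidef) :
    ∑ i ∈ Finset.univ.filter (fun i => hF.eigenvalues i < 0), hF.eigenvalues i ^ 2 ≤
      frobSq (F' - F) := by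
  set U : Matrix (Fin N) (Fin N) ℝ := ↑hF.eigenvectorUnitary
  have hstar : star U = Uᵀ := conjTranspose_eq_transpose_of_trivial U
  have hU : U * Uᵀ = 1 := hstar ▸ Unitary.coe_mul_star_self hF.eigenvectorUnitary
  have hdiag : Uᵀ * F * U = diagonal hF.eigenvalues := by
    simpa [hstar, U, star_eq_conjTranspose] using hF.conjStarAlgAut_star_eigenvectorUnitary
  have hG : (Uᵀ * F' * U).PosSemidef := by
    simpa using hF'.conjTranspose_mul_mul_same U
  calc _ ≤ ∑ i, ((Uᵀ * F' * U) i i - hF.eigenvalues i) ^ 2 :=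
        sum_sq_of_neg_le_sum_sq_sub _ _ fun _ => hG.diag_nonneg
    _ = ∑ i, (Uᵀ * (F' - F) * U) i i ^ 2 := by simp [Matrix.mul_sub, Matrix.sub_mul, hdiag]
    _ ≤ frobSq (Uᵀ * (F' - F) * U) := sum_sq_diag_le_frobSq _
    _ = frobSq (F' - F) := frobSq_transpose_mul_mul hU _

theorem optimal_stress_lower_bound_general {N : ℕ} (D : Matrix (Fin N) (Fin N) ℝ)
    (hF : (-(centerM N * D * centerM N)).IsHermitian) :
    (∑ i ∈ Finset.univ.filter (fun i => hF.eigenvalues i < 0),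
        (hF.eigenvalues i) ^ 2) ≤
      sInf {s : ℝ | ∃ D' : Matrix (Fin N) (Fin N) ℝ, IsEDM D' ∧ s = frobSq (D - D')} := by
  refine le_csInf ⟨_, 0, isEDM_zero N, rfl⟩ ?_
  rintro s ⟨D', hD', rfl⟩
  calc _ ≤ frobSq (-(centerM N * D' * centerM N) - -(centerM N * D * centerM N)) :=
        sum_sq_neg_eigenvalues_le_frobSq_sub hF hD'.2.2.2
    _ = frobSq (centerM N * (D - D') * centerM N) := by
        rw [Matrix.mul_sub, Matrix.sub_mul, neg_sub_neg]
    _ ≤ frobSq (D - D') :=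
        frobSq_mul_mul_le (transpose_centerM N) (isIdempotentElem_centerM N) _

/-- Lower bound on the optimal stress:
    `L* = inf_{D' EDM} ‖D − D'‖_F² ≥ Σ_{λ_i<0} λ_i²`,
    where the `λ_i` are the eigenvalues of `F = −JDJ`. -/
theorem optimal_stress_lower_bound {N : ℕ} (D : Matrix (Fin N) (Fin N) ℝ)
    (hD : D.IsSymm)
    (hF : (-(centerM N * D * centerM N)).IsHermitian) :
    (∑ i ∈ Finset.univ.filter (fun i => hF.eigenvalues i < 0),
        (hF.eigenvalues i) ^ 2) ≤
      sInf {s : ℝ | ∃ D' : Matrix (Fin N) (Fin N) ℝ, IsEDM D' ∧ s = frobSq (D - D')} :=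
  optimal_stress_lower_bound_general D hF
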